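/- Let H and B be Hopf quasigroups over a field k and g: B → H, f: H → B morphisms of Hopf quasigroups (morphisms of unital magmas and comonoids) with g ∘ f = id_H. Equip B with the right H-comodule structure ρ_B = (id_B ⊗ g) ∘ δ_B. Then f is an anchor morphism: f is a multiplicative total integral, and (b · f(x_(1))) · f(λ_H(x_(2))) = ε(x) b and (b · f(λ_H(x_(1)))) · f(x_(2)) = ε(x) b for all b ∈ B, x ∈ H. -/
import Mathlib


open TensorProduct

noncomputable section

namespace DoiHopf

variable (k : Type) [Field k]
variable (H : Type) [AddCommGroup H] [Module k H]

/-- A Hopf quasigroup structure on `H`: a unital (not necessarily associative) magma and a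
coassociative counital comonoid such that `eps` and `delta` are morphisms of unital magmas,
with an antipode `lam` satisfying the four Hopf quasigroup antipode identities. -/
structure IsHopfQuasigroup (mul : H ⊗[k] H →ₗ[k] H) (one : H)
    (eps : H →ₗ[k] k) (delta : H →ₗ[k] H ⊗[k] H) (lam : H →ₗ[k] H) : Prop where
  one_mul : ∀ x, mul (one ⊗ₜ[k] x) = x
  mul_one : ∀ x, mul (x ⊗ₜ[k] one) = x
  coassoc : (TensorProduct.assoc k H H H).toLinearMap ∘ₗ delta.rTensor H ∘ₗ delta
      = delta.lTensor H ∘ₗ delta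
  counit_left : ∀ x, (TensorProduct.lid k H) ((eps.rTensor H) (delta x)) = x
  counit_right : ∀ x, (TensorProduct.rid k H) ((eps.lTensor H) (delta x)) = x
  eps_mul : ∀ x y, eps (mul (x ⊗ₜ[k] y)) = eps x * eps y
  eps_one : eps one = 1
  delta_mul : delta ∘ₗ mul = (TensorProduct.map mul mul)
      ∘ₗ (TensorProduct.tensorTensorTensorComm k H H H H).toLinearMap
      ∘ₗ (TensorProduct.map delta delta)
  delta_one : delta one = one ⊗ₜ[k] one
  antipode_left₁ : mul ∘ₗ (TensorProduct.map lam mul)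
      ∘ₗ (TensorProduct.assoc k H H H).toLinearMap ∘ₗ delta.rTensor H
      = (TensorProduct.lid k H).toLinearMap ∘ₗ eps.rTensor H
  antipode_left₂ : mul ∘ₗ (TensorProduct.map (LinearMap.id : H →ₗ[k] H) (mul ∘ₗ lam.rTensor H))
      ∘ₗ (TensorProduct.assoc k H H H).toLinearMap ∘ₗ delta.rTensor H
      = (TensorProduct.lid k H).toLinearMap ∘ₗ eps.rTensor H
  antipode_right₁ : mul ∘ₗ (TensorProduct.map mul lam)
      ∘ₗ (TensorProduct.assoc k H H H).symm.toLinearMap ∘ₗ delta.lTensor H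
      = (TensorProduct.rid k H).toLinearMap ∘ₗ eps.lTensor H
  antipode_right₂ : mul ∘ₗ (TensorProduct.map (mul ∘ₗ lam.lTensor H) (LinearMap.id : H →ₗ[k] H))
      ∘ₗ (TensorProduct.assoc k H H H).symm.toLinearMap ∘ₗ delta.lTensor H
      = (TensorProduct.rid k H).toLinearMap ∘ₗ eps.lTensor H

/-- A right `H`-comodule magma structure on `B`: a unital magma which is a right `H`-comodule
whose coaction is multiplicative for the tensor product magma structure on `B ⊗ H` and
sends the unit to `1_B ⊗ 1_H`. -/
structure IsComoduleMagma (mul : H ⊗[k] H →ₗ[k] H) (one : H)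
    (eps : H →ₗ[k] k) (delta : H →ₗ[k] H ⊗[k] H)
    {B : Type} [AddCommGroup B] [Module k B]
    (mulB : B ⊗[k] B →ₗ[k] B) (oneB : B) (rho : B →ₗ[k] B ⊗[k] H) : Prop where
  oneB_mul : ∀ b, mulB (oneB ⊗ₜ[k] b) = b
  mul_oneB : ∀ b, mulB (b ⊗ₜ[k] oneB) = b
  counit : ∀ b, (TensorProduct.rid k B) ((eps.lTensor B) (rho b)) = b
  coassoc : rho.rTensor H ∘ₗ rho
      = (TensorProduct.assoc k B H H).symm.toLinearMap ∘ₗ delta.lTensor B ∘ₗ rho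
  mul_compat : rho ∘ₗ mulB = (TensorProduct.map mulB mul)
      ∘ₗ (TensorProduct.tensorTensorTensorComm k B H B H).toLinearMap
      ∘ₗ (TensorProduct.map rho rho)
  one_compat : rho oneB = oneB ⊗ₜ[k] one

/-- The generic "action against `f : H → B'` after the coaction" endomorphism; for
`f = h ∘ λ` this is the canonical idempotent `q` of the paper. -/
def act {M B' : Type} [AddCommGroup M] [Module k M] [AddCommGroup B'] [Module k B']
    (phi : M ⊗[k] B' →ₗ[k] M) (rho : M →ₗ[k] M ⊗[k] H) (f : H →ₗ[k] B') : M →ₗ[k] M :=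
  phi ∘ₗ f.lTensor M ∘ₗ rho

/-- An anchor morphism `h : H → B`: a multiplicative total integral (a morphism of unital
magmas and of right `H`-comodules) satisfying the two cancellation conditions (c1), (c2). -/
structure IsAnchor (mul : H ⊗[k] H →ₗ[k] H) (one : H)
    (eps : H →ₗ[k] k) (delta : H →ₗ[k] H ⊗[k] H) (lam : H →ₗ[k] H)
    {B : Type} [AddCommGroup B] [Module k B]
    (mulB : B ⊗[k] B →ₗ[k] B) (oneB : B) (rho : B →ₗ[k] B ⊗[k] H)
    (h : H →ₗ[k] B) : Prop where
  comod : rho ∘ₗ h = h.rTensor H ∘ₗ delta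
  unit : h one = oneB
  mul_morph : mulB ∘ₗ TensorProduct.map h h = h ∘ₗ mul
  c1 : mulB ∘ₗ (TensorProduct.map (mulB ∘ₗ h.lTensor B) (h ∘ₗ lam))
      ∘ₗ (TensorProduct.assoc k B H H).symm.toLinearMap ∘ₗ delta.lTensor B
      = (TensorProduct.rid k B).toLinearMap ∘ₗ eps.lTensor B
  c2 : mulB ∘ₗ (TensorProduct.map (mulB ∘ₗ (h ∘ₗ lam).lTensor B) h)
      ∘ₗ (TensorProduct.assoc k B H H).symm.toLinearMap ∘ₗ delta.lTensor B
      = (TensorProduct.rid k B).toLinearMap ∘ₗ eps.lTensor B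

variable (B : Type) [AddCommGroup B] [Module k B]
variable (mul : H ⊗[k] H →ₗ[k] H) (one : H) (eps : H →ₗ[k] k)
variable (delta : H →ₗ[k] H ⊗[k] H) (lam : H →ₗ[k] H)
variable (mulB : B ⊗[k] B →ₗ[k] B) (oneB : B) (epsB : B →ₗ[k] k)
variable (deltaB : B →ₗ[k] B ⊗[k] B) (lamB : B →ₗ[k] B)
variable (g : B →ₗ[k] H) (f : H →ₗ[k] B)

private lemma ext₃' {M N P Q : Type} [AddCommGroup M] [Module k M] [AddCommGroup N]
    [Module k N] [AddCommGroup P] [Module k P] [AddCommGroup Q] [Module k Q]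
    {F G : M ⊗[k] (N ⊗[k] P) →ₗ[k] Q}
    (h : ∀ m n p, F (m ⊗ₜ[k] (n ⊗ₜ[k] p)) = G (m ⊗ₜ[k] (n ⊗ₜ[k] p))) : F = G := by
  apply TensorProduct.ext'
  intro m s
  induction s using TensorProduct.induction_on with
  | zero => simp
  | tmul n p => exact h m n p
  | add u v hu hv => rw [TensorProduct.tmul_add, map_add, map_add, hu, hv]

section Aux

variable {mul : H ⊗[k] H →ₗ[k] H} {one : H} {eps : H →ₗ[k] k}
variable {delta : H →ₗ[k] H ⊗[k] H} {lam : H →ₗ[k] H}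

private lemma mul_lam_delta
    (hH : IsHopfQuasigroup k H mul one eps delta lam) (x : H) :
    mul ((lam.lTensor H) (delta x)) = eps x • one := by
  have aux : mul ∘ₗ TensorProduct.map mul lam
      ∘ₗ (TensorProduct.assoc k H H H).symm.toLinearMap
      ∘ₗ TensorProduct.mk k H (H ⊗[k] H) one
      = mul ∘ₗ lam.lTensor H := by
    apply TensorProduct.ext'
    intro a b
    simp [hH.one_mul]
  have h1 := LinearMap.congr_fun hH.antipode_right₁ (one ⊗ₜ[k] x)
  have h2 := LinearMap.congr_fun aux (delta x)
  simp only [LinearMap.comp_apply, LinearMap.lTensor_tmul, LinearEquiv.coe_coe,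
    TensorProduct.mk_apply, TensorProduct.rid_tmul] at h1 h2
  rw [h2] at h1
  exact h1

variable {B : Type} [AddCommGroup B] [Module k B]
variable {mulB : B ⊗[k] B →ₗ[k] B} {oneB : B} {epsB : B →ₗ[k] k}
variable {deltaB : B →ₗ[k] B ⊗[k] B} {lamB : B →ₗ[k] B}
variable {f : H →ₗ[k] B}

private lemma antipode_comm
    (hH : IsHopfQuasigroup k H mul one eps delta lam)
    (hB : IsHopfQuasigroup k B mulB oneB epsB deltaB lamB)
    (hf_one : f one = oneB)
    (hf_mul : mulB ∘ₗ TensorProduct.map f f = f ∘ₗ mul)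
    (hf_delta : TensorProduct.map f f ∘ₗ delta = deltaB ∘ₗ f)
    (hf_eps : epsB ∘ₗ f = eps)
    (x : H) : f (lam x) = lamB (f x) := by
  have hf_mul' : ∀ a b, mulB (f a ⊗ₜ[k] f b) = f (mul (a ⊗ₜ[k] b)) :=
    fun a b => LinearMap.congr_fun hf_mul (a ⊗ₜ[k] b)
  have hf_delta' : ∀ a, TensorProduct.map f f (delta a) = deltaB (f a) :=
    fun a => LinearMap.congr_fun hf_delta a
  have hf_eps' : ∀ a, epsB (f a) = eps a := fun a => LinearMap.congr_fun hf_eps a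
  set E : B := mulB ((TensorProduct.map (lamB ∘ₗ f) (f ∘ₗ mul ∘ₗ lam.lTensor H))
      ((delta.lTensor H) (delta x))) with hE
  -- Route 1 : E = lamB (f x)
  have aux1 : mulB ∘ₗ TensorProduct.map (lamB ∘ₗ f) (f ∘ₗ mul ∘ₗ lam.lTensor H)
      ∘ₗ delta.lTensor H
      = lamB ∘ₗ f ∘ₗ (TensorProduct.rid k H).toLinearMap ∘ₗ eps.lTensor H := by
    apply TensorProduct.ext'
    intro a b
    simp only [LinearMap.comp_apply, LinearMap.lTensor_tmul, TensorProduct.map_tmul,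
      LinearEquiv.coe_coe, TensorProduct.rid_tmul]
    rw [mul_lam_delta k H hH b]
    simp [TensorProduct.tmul_smul, hf_one, hB.mul_one]
  have e1 : E = lamB (f x) := by
    have h := LinearMap.congr_fun aux1 (delta x)
    simp only [LinearMap.comp_apply, LinearEquiv.coe_coe] at h
    rw [hE, h, hH.counit_right x]
  -- Route 2 : E = f (lam x)
  have aux2 : mulB ∘ₗ TensorProduct.map (lamB ∘ₗ f) (f ∘ₗ mul ∘ₗ lam.lTensor H)
      ∘ₗ (TensorProduct.assoc k H H H).toLinearMap
      = mulB ∘ₗ TensorProduct.map lamB mulB ∘ₗ (TensorProduct.assoc k B B B).toLinearMap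
        ∘ₗ (TensorProduct.map f f).rTensor B ∘ₗ (f ∘ₗ lam).lTensor (H ⊗[k] H) := by
    apply TensorProduct.ext_threefold
    intro a b c
    simp only [LinearMap.comp_apply, LinearEquiv.coe_coe, TensorProduct.assoc_tmul,
      TensorProduct.map_tmul, LinearMap.lTensor_tmul, LinearMap.rTensor_tmul]
    rw [← hf_mul' b (lam c)]
  have aux3 : (TensorProduct.map f f).rTensor B ∘ₗ (f ∘ₗ lam).lTensor (H ⊗[k] H)
      ∘ₗ delta.rTensor H
      = deltaB.rTensor B ∘ₗ TensorProduct.map f (f ∘ₗ lam) := by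
    apply TensorProduct.ext'
    intro a c
    simp only [LinearMap.comp_apply, LinearMap.rTensor_tmul, LinearMap.lTensor_tmul,
      TensorProduct.map_tmul]
    rw [hf_delta' a]
  have aux4 : (TensorProduct.lid k B).toLinearMap ∘ₗ epsB.rTensor B
      ∘ₗ TensorProduct.map f (f ∘ₗ lam)
      = f ∘ₗ lam ∘ₗ (TensorProduct.lid k H).toLinearMap ∘ₗ eps.rTensor H := by
    apply TensorProduct.ext'
    intro a c
    simp only [LinearMap.comp_apply, TensorProduct.map_tmul, LinearMap.rTensor_tmul,
      LinearEquiv.coe_coe, TensorProduct.lid_tmul, map_smul]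
    rw [hf_eps' a]
  have e2 : E = f (lam x) := by
    have coas := LinearMap.congr_fun hH.coassoc x
    simp only [LinearMap.comp_apply, LinearEquiv.coe_coe] at coas
    have h2 := LinearMap.congr_fun aux2 ((delta.rTensor H) (delta x))
    simp only [LinearMap.comp_apply, LinearEquiv.coe_coe] at h2
    have h3 := LinearMap.congr_fun aux3 (delta x)
    simp only [LinearMap.comp_apply] at h3
    have h4 := LinearMap.congr_fun hB.antipode_left₁
      ((TensorProduct.map f (f ∘ₗ lam)) (delta x))
    simp only [LinearMap.comp_apply, LinearEquiv.coe_coe] at h4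
    have h5 := LinearMap.congr_fun aux4 (delta x)
    simp only [LinearMap.comp_apply, LinearEquiv.coe_coe] at h5
    rw [hE, ← coas, h2, h3, h4, h5, hH.counit_left x]
  rw [← e2, e1]

end Aux

/-- Let `H`, `B` be Hopf quasigroups and `g : B → H`, `f : H → B` morphisms of Hopf
quasigroups (morphisms of unital magmas and of comonoids) with `g ∘ f = id_H`. Then,
for the right `H`-comodule structure `ρ_B = (id ⊗ g) ∘ δ_B` on `B`, the morphism `f`
is an anchor morphism. -/
theorem projection_anchor
    (hH : IsHopfQuasigroup k H mul one eps delta lam)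
    (hB : IsHopfQuasigroup k B mulB oneB epsB deltaB lamB)
    (hg_one : g oneB = one)
    (hg_mul : mul ∘ₗ TensorProduct.map g g = g ∘ₗ mulB)
    (hg_delta : TensorProduct.map g g ∘ₗ deltaB = delta ∘ₗ g)
    (hg_eps : eps ∘ₗ g = epsB)
    (hf_one : f one = oneB)
    (hf_mul : mulB ∘ₗ TensorProduct.map f f = f ∘ₗ mul)
    (hf_delta : TensorProduct.map f f ∘ₗ delta = deltaB ∘ₗ f)
    (hf_eps : epsB ∘ₗ f = eps)
    (hgf : g ∘ₗ f = LinearMap.id) :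
    IsAnchor k H mul one eps delta lam mulB oneB (g.lTensor B ∘ₗ deltaB) f := by
  have hgf' : ∀ y, g (f y) = y := fun y => LinearMap.congr_fun hgf y
  have hf_delta' : ∀ a, TensorProduct.map f f (delta a) = deltaB (f a) :=
    fun a => LinearMap.congr_fun hf_delta a
  have hf_eps' : ∀ a, epsB (f a) = eps a := fun a => LinearMap.congr_fun hf_eps a
  have hA : ∀ y, f (lam y) = lamB (f y) :=
    antipode_comm k H hH hB hf_one hf_mul hf_delta hf_eps
  refine ⟨?_, hf_one, hf_mul, ?_, ?_⟩
  · -- comod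
    have aux : g.lTensor B ∘ₗ TensorProduct.map f f = f.rTensor H := by
      apply TensorProduct.ext'
      intro a b
      simp [hgf']
    apply LinearMap.ext
    intro x
    have h1 := LinearMap.congr_fun aux (delta x)
    simp only [LinearMap.comp_apply] at h1 ⊢
    rw [← hf_delta' x, h1]
  · -- c1
    have G12 : mulB ∘ₗ TensorProduct.map (mulB ∘ₗ f.lTensor B) (f ∘ₗ lam)
        ∘ₗ (TensorProduct.assoc k B H H).symm.toLinearMap
        = mulB ∘ₗ TensorProduct.map mulB lamB
          ∘ₗ (TensorProduct.assoc k B B B).symm.toLinearMap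
          ∘ₗ (TensorProduct.map f f).lTensor B := by
      apply ext₃' k
      intro b x y
      simp only [LinearMap.comp_apply, LinearEquiv.coe_coe, TensorProduct.assoc_symm_tmul,
        TensorProduct.map_tmul, LinearMap.lTensor_tmul]
      rw [hA y]
    apply TensorProduct.ext'
    intro b x
    have h1 := LinearMap.congr_fun G12 (b ⊗ₜ[k] delta x)
    have h2 := LinearMap.congr_fun hB.antipode_right₁ (b ⊗ₜ[k] f x)
    simp only [LinearMap.comp_apply, LinearMap.lTensor_tmul, LinearEquiv.coe_coe,
      TensorProduct.rid_tmul] at h1 h2 ⊢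
    rw [h1, hf_delta' x, h2, hf_eps' x]
  · -- c2
    have G12 : mulB ∘ₗ TensorProduct.map (mulB ∘ₗ (f ∘ₗ lam).lTensor B) f
        ∘ₗ (TensorProduct.assoc k B H H).symm.toLinearMap
        = mulB ∘ₗ TensorProduct.map (mulB ∘ₗ lamB.lTensor B) LinearMap.id
          ∘ₗ (TensorProduct.assoc k B B B).symm.toLinearMap
          ∘ₗ (TensorProduct.map f f).lTensor B := by
      apply ext₃' k
      intro b x y
      simp only [LinearMap.comp_apply, LinearEquiv.coe_coe, TensorProduct.assoc_symm_tmul,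
        TensorProduct.map_tmul, LinearMap.lTensor_tmul, LinearMap.id_apply]
      rw [hA x]
    apply TensorProduct.ext'
    intro b x
    have h1 := LinearMap.congr_fun G12 (b ⊗ₜ[k] delta x)
    have h2 := LinearMap.congr_fun hB.antipode_right₂ (b ⊗ₜ[k] f x)
    simp only [LinearMap.comp_apply, LinearMap.lTensor_tmul, LinearEquiv.coe_coe,
      TensorProduct.rid_tmul] at h1 h2 ⊢
    rw [h1, hf_delta' x, h2, hf_eps' x]
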